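/- arXiv:2512.22841 — 5 statements merged into one kernel-verified Lean document; each statement's English description precedes it below -/
import Mathlib

section
/- Let X be a finite type, R ⊆ FreeGroup X, Q := PresentedGroup R, Σ ⊆ FreeGroup X a finite nonempty set, and k ≥ 1. If PresentedGroup (R ∪ Σ) is the trivial group (equivalently, the normal closure in Q of the image of Σ is all of Q), then there exists a surjective group homomorphism from W_{Σ,k} onto Q^{k+1}, namely the one sending each generator x ∈ X to the diagonal element (x̄,…,x̄) and each generator y_{sσ} to the element of Q^{k+1} whose (s+1)-st coordinate is σ̄ and whose other coordinates are 1, where x̄, σ̄ denote the images of x and σ in Q. (The forward implication in Lemma 3.1; it requires none of the Hopfian or centralizer hypotheses.) -/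
open scoped commutatorElement

/-- The relator set of the group `W_{Σ,k}`. -/
def Wrels (X : Type) (R : Set (FreeGroup X)) (Sg : Set (FreeGroup X)) (k : ℕ) :
    Set (FreeGroup (X ⊕ (Fin k × Sg))) :=
  (FreeGroup.map Sum.inl) '' R ∪
    { w | ∃ (s : Fin k) (σ σ' : Sg),
        w = ⁅(FreeGroup.map Sum.inl (σ : FreeGroup X))⁻¹ * FreeGroup.of (Sum.inr (s, σ)),
              FreeGroup.of (Sum.inr (s, σ'))⁆ } ∪
    { w | ∃ (s t : Fin k) (σ σ' : Sg), s ≠ t ∧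
        w = ⁅(FreeGroup.of (Sum.inr (s, σ)) : FreeGroup (X ⊕ (Fin k × Sg))),
              FreeGroup.of (Sum.inr (t, σ'))⁆ }

/-- The forward implication in Lemma 3.1: if `⟨X | R ∪ Σ⟩` is trivial then `W_{Σ,k}`
maps onto `Q^{k+1}` by the explicit map sending each generator `x` to the diagonal
element and `y_{sσ}` to the tuple with `σ̄` in the `(s+1)`-st coordinate and `1`
elsewhere. -/
theorem stmt1 (X : Type) [Finite X] (R : Set (FreeGroup X))
    (Sg : Set (FreeGroup X)) (hSfin : Sg.Finite) (hSne : Sg.Nonempty)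
    (k : ℕ) (hk : 1 ≤ k)
    (htriv : Subsingleton (PresentedGroup (R ∪ Sg))) :
    ∃ φ : PresentedGroup (Wrels X R Sg k) →* (Fin (k + 1) → PresentedGroup R),
      Function.Surjective φ ∧
      (∀ x : X, ∀ i : Fin (k + 1),
        φ (PresentedGroup.of (Sum.inl x)) i = PresentedGroup.of x) ∧
      (∀ (s : Fin k) (σ : Sg) (i : Fin (k + 1)),
        φ (PresentedGroup.of (Sum.inr (s, σ))) i =
          if i = s.succ then (QuotientGroup.mk (σ : FreeGroup X) : PresentedGroup R)
          else 1) := by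
  classical
  -- the map on generators
  set f : X ⊕ (Fin k × Sg) → (Fin (k + 1) → PresentedGroup R) :=
    fun a => Sum.rec (fun x => fun _ => PresentedGroup.of x)
      (fun p => fun i => if i = p.1.succ then
          (QuotientGroup.mk (p.2 : FreeGroup X) : PresentedGroup R) else 1) a with hf
  -- key computation on words of the first kind
  have hmap : ∀ w : FreeGroup X, ∀ i : Fin (k + 1),
      FreeGroup.lift f (FreeGroup.map Sum.inl w) i =
        (QuotientGroup.mk w : PresentedGroup R) := by
    intro w i
    have : ((Pi.evalMonoidHom (fun _ : Fin (k+1) => PresentedGroup R) i).comp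
        ((FreeGroup.lift f).comp (FreeGroup.map Sum.inl))) =
        QuotientGroup.mk' (Subgroup.normalClosure R) := by
      apply FreeGroup.ext_hom
      intro a
      simp [hf, PresentedGroup.of]
      rfl
    exact DFunLike.congr_fun this w
  -- relators are killed
  have hrel : ∀ r ∈ Wrels X R Sg k, FreeGroup.lift f r = 1 := by
    rintro r (( ⟨ρ, hρ, rfl⟩ | ⟨s, σ, σ', rfl⟩ ) | ⟨s, t, σ, σ', hst, rfl⟩)
    · funext i
      rw [hmap ρ i]
      rw [Pi.one_apply]
      exact (QuotientGroup.eq_one_iff ρ).mpr (Subgroup.subset_normalClosure hρ)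
    · funext i
      simp only [commutatorElement_def, map_mul, map_inv, Pi.mul_apply, Pi.inv_apply,
        FreeGroup.lift_apply_of, hmap]
      by_cases h : i = s.succ
      · simp [hf, h]
        erw [inv_mul_cancel, one_mul, inv_one, mul_one, mul_inv_cancel]
      · simp [hf, h]
    · funext i
      simp only [commutatorElement_def, map_mul, map_inv, Pi.mul_apply, Pi.inv_apply,
        FreeGroup.lift_apply_of]
      have : i = s.succ → i ≠ t.succ := by
        rintro rfl h; exact hst (Fin.succ_injective _ h)
      by_cases h : i = s.succ
      · simp [hf, h, this h, hst]
        erw [mul_one, mul_inv_cancel]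
      · simp [hf, h]
  refine ⟨PresentedGroup.toGroup hrel, ?_, ?_, ?_⟩
  · -- surjectivity
    set φ := PresentedGroup.toGroup hrel with hφ
    have hφmk : ∀ w : FreeGroup (X ⊕ (Fin k × Sg)),
        φ (QuotientGroup.mk w) = FreeGroup.lift f w := fun _ => rfl
    -- diagonal elements are in the range
    have hdiag : ∀ q : PresentedGroup R, (fun _ => q) ∈ φ.range := by
      intro q
      obtain ⟨w, rfl⟩ := QuotientGroup.mk'_surjective (Subgroup.normalClosure R) q
      exact ⟨QuotientGroup.mk (FreeGroup.map Sum.inl w), by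
        rw [hφmk]; funext i; exact hmap w i⟩
    -- normal closure of image of Sg is everything
    have hNC : Subgroup.normalClosure
        ((QuotientGroup.mk : FreeGroup X → PresentedGroup R) '' Sg) = ⊤ := by
      rw [eq_top_iff]
      rintro q -
      obtain ⟨w, rfl⟩ := QuotientGroup.mk'_surjective (Subgroup.normalClosure R) q
      have hss : Subsingleton (FreeGroup X ⧸ Subgroup.normalClosure (R ∪ Sg)) := htriv
      have hw : w ∈ Subgroup.normalClosure (R ∪ Sg) := by
        rw [← QuotientGroup.eq_one_iff (G := FreeGroup X)
          (N := Subgroup.normalClosure (R ∪ Sg)) w]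
        exact Subsingleton.elim _ _
      have hle : Subgroup.normalClosure (R ∪ Sg) ≤
          (Subgroup.normalClosure
            ((QuotientGroup.mk : FreeGroup X → PresentedGroup R) '' Sg)).comap
            (QuotientGroup.mk' (Subgroup.normalClosure R)) := by
        apply Subgroup.normalClosure_le_normal
        rintro x (hx | hx)
        · have hx1 : (QuotientGroup.mk x : PresentedGroup R) = 1 :=
            (QuotientGroup.eq_one_iff x).mpr (Subgroup.subset_normalClosure hx)
          simp only [SetLike.mem_coe, Subgroup.mem_comap, QuotientGroup.mk'_apply, hx1]
          exact one_mem _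
        · exact Subgroup.subset_normalClosure ⟨x, hx, rfl⟩
      exact hle hw
    -- each basis-like element is in the range
    have hbasis : ∀ (s : Fin k) (q : PresentedGroup R),
        (fun i => if i = s.succ then q else 1) ∈ φ.range := by
      intro s
      set N : Subgroup (PresentedGroup R) :=
        { carrier := {q | (fun i => if i = s.succ then q else 1) ∈ φ.range}
          one_mem' := by
            simp only [Set.mem_setOf_eq]
            convert one_mem φ.range using 1
            funext i; simp
          mul_mem' := by
            intro a b ha hb
            simp only [Set.mem_setOf_eq] at *
            convert mul_mem ha hb using 1
            funext i; by_cases h : i = s.succ <;> simp [h]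
          inv_mem' := by
            intro a ha
            simp only [Set.mem_setOf_eq] at *
            convert inv_mem ha using 1
            funext i; by_cases h : i = s.succ <;> simp [h] } with hN
      have hNnormal : N.Normal := by
        constructor
        intro a ha g
        have : (fun i => if i = s.succ then g * a * g⁻¹ else 1) =
            (fun _ => g) * (fun i => if i = s.succ then a else 1) * (fun _ => g⁻¹) := by
          funext i; by_cases h : i = s.succ <;> simp [h]
        have ha' : (fun i => if i = s.succ then a else 1) ∈ φ.range := ha
        show (fun i => if i = s.succ then g * a * g⁻¹ else 1) ∈ φ.range
        rw [this]
        exact mul_mem (mul_mem (hdiag g) ha') (hdiag g⁻¹)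
      have hsub : Subgroup.normalClosure
          ((QuotientGroup.mk : FreeGroup X → PresentedGroup R) '' Sg) ≤ N := by
        apply @Subgroup.normalClosure_le_normal _ _ _ N hNnormal
        rintro x ⟨σ, hσ, rfl⟩
        show _ ∈ {q | _}
        show (fun i => if i = s.succ then (QuotientGroup.mk σ : PresentedGroup R) else 1) ∈ φ.range
        exact ⟨PresentedGroup.of (Sum.inr (s, ⟨σ, hσ⟩)), by
          rw [hφ, PresentedGroup.toGroup.of]; rfl⟩
      intro q
      exact hsub (hNC ▸ Subgroup.mem_top q)
    -- conclude surjectivity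
    have key : ∀ n : ℕ, n ≤ k → ∀ u : Fin (k + 1) → PresentedGroup R,
        (∀ i : Fin (k + 1), i.val + n < k + 1 → u i = 1) → u ∈ φ.range := by
      intro n
      induction n with
      | zero =>
        intro _ u hu
        have : u = 1 := funext fun i => by
          simpa using hu i (by omega)
        rw [this]; exact one_mem _
      | succ n ih =>
        intro hn u hu
        set j : ℕ := k - n with hj
        have hj1 : 1 ≤ j := by omega
        have hjk : j < k + 1 := by omega
        set t : Fin k := ⟨j - 1, by omega⟩ with ht
        have hts : (t.succ : Fin (k+1)).val = j := by
          simp [ht, Fin.val_succ]; omega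
        set u' : Fin (k + 1) → PresentedGroup R :=
          fun i => if i = t.succ then 1 else u i with hu'
        have hdecomp : u = (fun i => if i = t.succ then u t.succ else 1) * u' := by
          funext i
          by_cases h : i = t.succ <;> simp [hu', h]
        have hu'mem : u' ∈ φ.range := by
          apply ih (by omega)
          intro i hi
          by_cases h : i = t.succ
          · simp [hu', h]
          · simp only [hu', h, if_neg]
            apply hu
            have : i.val ≠ j := fun hij => h (Fin.ext (by rw [hts, hij]))
            omega
        rw [hdecomp]
        exact mul_mem (hbasis t _) hu'mem
    intro v
    set u : Fin (k + 1) → PresentedGroup R := (fun _ => (v 0)⁻¹) * v with hu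
    have hv : v = (fun _ => v 0) * u := by
      funext i; simp [hu]
    have humem : u ∈ φ.range := by
      apply key k le_rfl
      intro i hi
      have : i = 0 := Fin.ext (by simp only [Fin.val_zero]; omega)
      simp [hu, this]
    rw [hv]
    exact mul_mem (hdiag (v 0)) humem
  · intro x i
    rw [PresentedGroup.toGroup.of]
  · intro s σ i
    rw [PresentedGroup.toGroup.of]
    rfl
end

section
/- Let X be a finite type, R ⊆ FreeGroup X, and Q := PresentedGroup R. Assume Q is Hopfian, there exists a surjective group homomorphism Q → FreeGroup (Fin 2), and centralizers of non-cyclic free subgroups of Q are trivial. Let Σ ⊆ FreeGroup X be finite nonempty with the abelianization of PresentedGroup (R ∪ Σ) a torsion group. Suppose φ : W_{Σ,1} → Q × Q is a surjective group homomorphism. Let H := Subgroup.closure { y_{1σ} : σ ∈ Σ } and H' := Subgroup.closure { ι(σ)⁻¹ · y_{1σ} : σ ∈ Σ } (the generators understood as their images in W_{Σ,1}). Then the normal closure of H ∪ H' in W_{Σ,1} is the whole group W_{Σ,1}. (Claim 3.2 of the paper.) -/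
open scoped commutatorElement


/-- A group is Hopfian if every surjective endomorphism is injective. -/
def IsHopfian (G : Type*) [Group G] : Prop :=
  ∀ φ : G →* G, Function.Surjective φ → Function.Injective φ

private lemma commute_closure {G : Type*} [Group G] {S T : Set G}
    (h : ∀ s ∈ S, ∀ t ∈ T, Commute s t) :
    ∀ a ∈ Subgroup.closure S, ∀ b ∈ Subgroup.closure T, Commute a b := by
  have key : ∀ s ∈ S, ∀ b ∈ Subgroup.closure T, Commute s b := by
    intro s hs b hb
    induction hb using Subgroup.closure_induction with
    | mem t ht => exact h s hs t ht
    | one => exact Commute.one_right s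
    | mul x y _ _ hx hy => exact hx.mul_right hy
    | inv x _ hx => exact hx.inv_right
  intro a ha b hb
  induction ha using Subgroup.closure_induction with
  | mem s hs => exact key s hs b hb
  | one => exact Commute.one_left b
  | mul x y _ _ hx hy => exact hx.mul_left hy
  | inv x _ hx => exact hx.inv_left

private lemma freeGroup_noncomm {S : Type*} {a b : S} (hab : a ≠ b) :
    ¬ Commute (FreeGroup.of a) (FreeGroup.of b) := by
  classical
  intro hcomm
  set σ : Equiv.Perm (Fin 3) := Equiv.swap 0 1 with hσ
  set τ : Equiv.Perm (Fin 3) := Equiv.swap 1 2 with hτ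
  set f : S → Equiv.Perm (Fin 3) := fun s => if s = a then σ else τ with hf
  have hfa : f a = σ := by simp [hf]
  have hfb : f b = τ := by rw [hf]; exact if_neg (fun h : b = a => hab h.symm)
  have h := congrArg (FreeGroup.lift f) hcomm.eq
  rw [map_mul, map_mul, FreeGroup.lift_apply_of, FreeGroup.lift_apply_of, hfa, hfb] at h
  have : σ * τ ≠ τ * σ := by rw [hσ, hτ]; decide
  exact this h

private lemma freeGroup_pow {S : Type*} (hS : Subsingleton S) :
    ∃ t : FreeGroup S, ∀ x : FreeGroup S, ∃ n : ℤ, x = t ^ n := by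
  rcases isEmpty_or_nonempty S with hE | ⟨⟨g₀⟩⟩
  · refine ⟨1, fun x => ⟨0, ?_⟩⟩
    induction x using FreeGroup.induction_on with
    | C1 => simp
    | of g => exact hE.elim g
    | inv_of g _ => exact hE.elim g
    | mul x y hx hy => rw [hx, hy]; simp
  · refine ⟨FreeGroup.of g₀, fun x => ?_⟩
    induction x using FreeGroup.induction_on with
    | C1 => exact ⟨0, by simp⟩
    | of g => exact ⟨1, by rw [Subsingleton.elim g g₀, zpow_one]⟩
    | inv_of g hg => obtain ⟨n, hn⟩ := hg; exact ⟨-n, by rw [hn, ← zpow_neg]⟩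
    | mul x y hx hy =>
        obtain ⟨n, hn⟩ := hx; obtain ⟨m, hm⟩ := hy
        exact ⟨n + m, by rw [hn, hm, zpow_add]⟩

private lemma free_comm_pow {G : Type*} [Group G] [IsFreeGroup G]
    (hc : ∀ x y : G, Commute x y) : ∃ t : G, ∀ x : G, ∃ n : ℤ, x = t ^ n := by
  have e := IsFreeGroup.toFreeGroup G
  have hsub : Subsingleton (IsFreeGroup.Generators G) := by
    by_contra hns
    rw [not_subsingleton_iff_nontrivial] at hns
    obtain ⟨a, b, hab⟩ := hns.exists_pair_ne
    apply freeGroup_noncomm hab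
    have := hc (e.symm (FreeGroup.of a)) (e.symm (FreeGroup.of b))
    have h2 := congrArg e this.eq
    simpa [map_mul, Commute, SemiconjBy] using h2
  obtain ⟨t', ht'⟩ := freeGroup_pow hsub
  refine ⟨e.symm t', fun x => ?_⟩
  obtain ⟨n, hn⟩ := ht' (e x)
  exact ⟨n, by rw [← e.symm_apply_apply x, hn, map_zpow]⟩

private lemma prod_surj_left {G A B : Type*} [Group G] [Group A] [Group B]
    (h : G →* A × B) (hs : Function.Surjective h)
    (hinj : Function.Injective ((MonoidHom.snd A B).comp h)) : ∀ a : A, a = 1 := by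
  intro a
  obtain ⟨q, hq⟩ := hs (a, 1)
  have hq1 : q = 1 := by
    apply hinj
    simp only [MonoidHom.comp_apply, hq, map_one]
    rfl
  rw [hq1, map_one] at hq
  exact (congrArg Prod.fst hq).symm

private lemma prod_surj_right {G A B : Type*} [Group G] [Group A] [Group B]
    (h : G →* A × B) (hs : Function.Surjective h)
    (hinj : Function.Injective ((MonoidHom.fst A B).comp h)) : ∀ b : B, b = 1 := by
  intro b
  obtain ⟨q, hq⟩ := hs (1, b)
  have hq1 : q = 1 := by
    apply hinj
    simp only [MonoidHom.comp_apply, hq, map_one]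
    rfl
  rw [hq1, map_one] at hq
  exact (congrArg Prod.snd hq).symm

private noncomputable def alpha (i : Fin 2) : FreeGroup (Fin 2) →* Multiplicative ℤ :=
  FreeGroup.lift (fun j => if j = i then Multiplicative.ofAdd (1 : ℤ) else 1)

private lemma exists_lam (t : FreeGroup (Fin 2)) :
    ∃ lam : FreeGroup (Fin 2) →* Multiplicative ℤ, lam t = 1 ∧
      ¬ (lam (FreeGroup.of 0) = 1 ∧ lam (FreeGroup.of 1) = 1) := by
  by_cases h0 : alpha 0 t = 1 ∧ alpha 1 t = 1
  · refine ⟨alpha 0, h0.1, fun hc => ?_⟩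
    have : alpha 0 (FreeGroup.of 0) = Multiplicative.ofAdd (1 : ℤ) := by
      simp [alpha, FreeGroup.lift_apply_of]
    rw [hc.1] at this
    exact absurd this.symm (by decide)
  · set a := alpha 1 t with ha
    set b := (alpha 0 t)⁻¹ with hb
    set lam : FreeGroup (Fin 2) →* Multiplicative ℤ :=
      FreeGroup.lift (fun j => if j = 0 then a else b) with hlam
    have key : lam = ((zpowersHom _ a).comp (alpha 0)) * ((zpowersHom _ b).comp (alpha 1)) := by
      apply FreeGroup.ext_hom
      intro j
      fin_cases j <;>
        simp [hlam, alpha, FreeGroup.lift_apply_of, zpowersHom_apply]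
    refine ⟨lam, ?_, ?_⟩
    · rw [key]
      show (zpowersHom _ a) (alpha 0 t) * (zpowersHom _ b) (alpha 1 t) = 1
      rw [zpowersHom_apply, zpowersHom_apply, ha, hb]
      set x := alpha 0 t
      set y := alpha 1 t
      have h : (y ^ x.toAdd * (x⁻¹) ^ y.toAdd).toAdd = 0 := by
        rw [toAdd_mul, toAdd_zpow, toAdd_zpow, toAdd_inv]
        simp only [smul_eq_mul]
        ring
      exact toAdd_eq_zero.mp h
    · intro hc
      apply h0
      have l0 : lam (FreeGroup.of 0) = a := by simp [hlam, FreeGroup.lift_apply_of]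
      have l1 : lam (FreeGroup.of 1) = b := by simp [hlam, FreeGroup.lift_apply_of]
      rw [l0] at hc
      have hb1 : b = 1 := by rw [← l1, hc.2]
      constructor
      · rw [hb] at hb1; exact inv_eq_one.mp hb1
      · exact hc.1

private lemma kill {Q : Type*} [Group Q]
    (hcent : ∀ H : Subgroup Q, IsFreeGroup H → ¬ IsCyclic H →
      Subgroup.centralizer (H : Set Q) = ⊥)
    (θ : Q →* FreeGroup (Fin 2)) (A' B' : Subgroup Q)
    (hAB : ∀ a ∈ A', ∀ b ∈ B', Commute a b)
    (hnc : ∃ j ∈ Subgroup.map θ A', ∃ j' ∈ Subgroup.map θ A',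
      ¬ Commute j j') : B' = ⊥ := by
  classical
  obtain ⟨j, hj, j', hj', hjj'⟩ := hnc
  set J := Subgroup.map θ A' with hJ
  haveI : IsFreeGroup J := inferInstance
  -- pick preimages of the generators
  have hpick : ∀ g : IsFreeGroup.Generators J,
      ∃ a : Q, a ∈ A' ∧ θ a = ((IsFreeGroup.of g : J) : FreeGroup (Fin 2)) := by
    intro g
    obtain ⟨a, ha, hθa⟩ := (IsFreeGroup.of g : J).2
    exact ⟨a, ha, hθa⟩
  choose pick hpickA hpickθ using hpick
  set s : J →* A' := IsFreeGroup.lift (fun g => (⟨pick g, hpickA g⟩ : A')) with hs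
  have hsec : ∀ x : J, θ (A'.subtype (s x)) = (x : FreeGroup (Fin 2)) := by
    have : ((θ.comp A'.subtype).comp s) = J.subtype := by
      apply IsFreeGroup.ext_hom
      intro g
      simp only [MonoidHom.comp_apply, hs, IsFreeGroup.lift_of]
      exact hpickθ g
    intro x
    exact congrArg (fun f : J →* FreeGroup (Fin 2) => f x) this
  have hinj : Function.Injective (A'.subtype.comp s) := by
    intro x y hxy
    have : θ (A'.subtype (s x)) = θ (A'.subtype (s y)) := by
      simp only [MonoidHom.comp_apply] at hxy
      rw [hxy]
    rw [hsec, hsec] at this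
    exact Subtype.ext this
  set H := (A'.subtype.comp s).range with hH
  have e : J ≃* H := MonoidHom.ofInjective hinj
  haveI : IsFreeGroup H := IsFreeGroup.ofMulEquiv e
  have hHsub : (H : Set Q) ⊆ (A' : Set Q) := by
    rintro x ⟨z, rfl⟩
    exact (s z).2
  have hnotcyc : ¬ IsCyclic H := by
    intro hcyc
    obtain ⟨g, hg⟩ := hcyc.exists_generator
    have hcomm : ∀ x y : H, Commute x y := by
      intro x y
      obtain ⟨m, hm⟩ := hg x
      obtain ⟨n, hn⟩ := hg y
      rw [← hm, ← hn]
      exact (Commute.refl g).zpow_zpow m n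
    set xj : H := ⟨A'.subtype (s ⟨j, hj⟩), ⟨⟨j, hj⟩, rfl⟩⟩
    set yj : H := ⟨A'.subtype (s ⟨j', hj'⟩), ⟨⟨j', hj'⟩, rfl⟩⟩
    have hc := hcomm xj yj
    have hcQ : Commute (xj : Q) (yj : Q) := by
      have := congrArg (Subtype.val) hc.eq
      exact this
    have hcF : Commute (θ (xj : Q)) (θ (yj : Q)) := hcQ.map θ
    rw [show ((xj : Q)) = A'.subtype (s ⟨j, hj⟩) from rfl,
      show ((yj : Q)) = A'.subtype (s ⟨j', hj'⟩) from rfl, hsec, hsec] at hcF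
    exact hjj' hcF
  have hbot := hcent H inferInstance hnotcyc
  rw [eq_bot_iff, ← hbot]
  intro b hb
  rw [Subgroup.mem_centralizer_iff]
  intro h hh
  exact (hAB h (hHsub hh) b hb).eq

private lemma coord {X : Type} (R : Set (FreeGroup X)) (Sg : Set (FreeGroup X))
    (hcent : ∀ H : Subgroup (PresentedGroup R), IsFreeGroup H → ¬ IsCyclic H →
      Subgroup.centralizer (H : Set (PresentedGroup R)) = ⊥)
    (θ : PresentedGroup R →* FreeGroup (Fin 2)) (hθ : Function.Surjective θ)
    (htors : Monoid.IsTorsion (Abelianization (PresentedGroup (R ∪ Sg))))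
    (d : PresentedGroup R →* PresentedGroup R)
    (w c : Sg → PresentedGroup R)
    (hdc : ∀ σ : Sg, d (PresentedGroup.mk R (σ : FreeGroup X)) = w σ * (c σ)⁻¹)
    (hcw : ∀ σ τ : Sg, Commute (c σ) (w τ))
    (hg : (⊤ : Subgroup (PresentedGroup R)) = Subgroup.closure
      (Set.range (fun x : X => d (PresentedGroup.of x)) ∪ Set.range w)) :
    (∀ σ : Sg, c σ = 1) ∨ (∀ σ : Sg, w σ = 1) := by
  classical
  by_cases hc : ∀ σ : Sg, c σ = 1
  · exact Or.inl hc
  by_cases hw : ∀ σ : Sg, w σ = 1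
  · exact Or.inr hw
  exfalso
  push_neg at hc hw
  obtain ⟨σ₀, hσ₀⟩ := hc
  obtain ⟨τ₀, hτ₀⟩ := hw
  set A' := Subgroup.closure (Set.range w) with hA'
  set B' := Subgroup.closure (Set.range c) with hB'
  have hwA : ∀ σ : Sg, w σ ∈ A' := fun σ => Subgroup.subset_closure ⟨σ, rfl⟩
  have hcB : ∀ σ : Sg, c σ ∈ B' := fun σ => Subgroup.subset_closure ⟨σ, rfl⟩
  have hcomm : ∀ a ∈ A', ∀ b ∈ B', Commute a b := by
    apply commute_closure
    rintro s ⟨τ, rfl⟩ t ⟨σ, rfl⟩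
    exact (hcw σ τ).symm
  -- images in the free group commute
  have hJA : ∀ j ∈ Subgroup.map θ A', ∀ j' ∈ Subgroup.map θ A', Commute j j' := by
    by_contra hncomm
    push_neg at hncomm
    obtain ⟨j, hj, j', hj', hjj'⟩ := hncomm
    have hB'bot := kill hcent θ A' B' hcomm ⟨j, hj, j', hj', hjj'⟩
    rw [hB'bot] at hcB
    exact hσ₀ (Subgroup.mem_bot.mp (hcB σ₀))
  have hJB : ∀ j ∈ Subgroup.map θ B', ∀ j' ∈ Subgroup.map θ B', Commute j j' := by
    by_contra hncomm
    push_neg at hncomm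
    obtain ⟨j, hj, j', hj', hjj'⟩ := hncomm
    have hA'bot := kill hcent θ B' A'
      (fun b hb a ha => (hcomm a ha b hb).symm) ⟨j, hj, j', hj', hjj'⟩
    rw [hA'bot] at hwA
    exact hτ₀ (Subgroup.mem_bot.mp (hwA τ₀))
  -- the set of images
  set S₀ : Set (FreeGroup (Fin 2)) :=
    Set.range (fun σ : Sg => θ (w σ)) ∪ Set.range (fun σ : Sg => θ (c σ)) with hS₀
  have hmemA : ∀ σ : Sg, θ (w σ) ∈ Subgroup.map θ A' := fun σ => ⟨w σ, hwA σ, rfl⟩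
  have hmemB : ∀ σ : Sg, θ (c σ) ∈ Subgroup.map θ B' := fun σ => ⟨c σ, hcB σ, rfl⟩
  have hS₀comm : ∀ x ∈ S₀, ∀ y ∈ S₀, Commute x y := by
    rintro x (⟨σ, rfl⟩ | ⟨σ, rfl⟩) y (⟨τ, rfl⟩ | ⟨τ, rfl⟩)
    · exact hJA _ (hmemA σ) _ (hmemA τ)
    · exact ((hcomm (w σ) (hwA σ) (c τ) (hcB τ)).map θ)
    · exact ((hcomm (w τ) (hwA τ) (c σ) (hcB σ)).map θ).symm
    · exact hJB _ (hmemB σ) _ (hmemB τ)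
  set T := Subgroup.closure S₀ with hT
  have hTw : ∀ σ : Sg, θ (w σ) ∈ T := fun σ => Subgroup.subset_closure (Or.inl ⟨σ, rfl⟩)
  have hTc : ∀ σ : Sg, θ (c σ) ∈ T := fun σ => Subgroup.subset_closure (Or.inr ⟨σ, rfl⟩)
  have hTcomm := commute_closure hS₀comm
  have hc' : ∀ x y : T, Commute x y := by
    intro x y
    exact Subtype.ext ((hTcomm x.1 x.2 y.1 y.2).eq)
  obtain ⟨t₀, ht₀⟩ := free_comm_pow hc'
  have hpow : ∀ x ∈ T, ∃ n : ℤ, x = ((t₀ : FreeGroup (Fin 2))) ^ n := by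
    intro x hx
    obtain ⟨n, hn⟩ := ht₀ ⟨x, hx⟩
    refine ⟨n, ?_⟩
    have := congrArg (Subtype.val) hn
    simpa using this
  obtain ⟨lam, hlamt, hlamne⟩ := exists_lam (t₀ : FreeGroup (Fin 2))
  have hlamT : ∀ x ∈ T, lam x = 1 := by
    intro x hx
    obtain ⟨n, hn⟩ := hpow x hx
    rw [hn, map_zpow, hlamt, one_zpow]
  -- the homomorphism χ
  set χ := lam.comp (θ.comp d) with hχ
  have hχσ : ∀ σ : Sg, χ (PresentedGroup.mk R (σ : FreeGroup X)) = 1 := by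
    intro σ
    have : χ (PresentedGroup.mk R (σ : FreeGroup X)) = lam (θ (w σ * (c σ)⁻¹)) := by
      rw [hχ]
      simp only [MonoidHom.comp_apply, hdc σ]
    rw [this, map_mul, map_mul, map_inv, map_inv,
      hlamT _ (hTw σ), hlamT _ (hTc σ)]
    simp
  have hχne : ∃ q, χ q ≠ 1 := by
    by_contra hall
    push_neg at hall
    have htop : (⊤ : Subgroup (FreeGroup (Fin 2))) ≤ lam.ker := by
      have h1 : Subgroup.map θ ⊤ = ⊤ := Subgroup.map_top_of_surjective θ hθ
      rw [hg] at h1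
      rw [MonoidHom.map_closure] at h1
      rw [← h1]
      rw [Subgroup.closure_le]
      rintro y ⟨x, (⟨x', rfl⟩ | ⟨σ, rfl⟩), rfl⟩
      · have : lam (θ (d (PresentedGroup.of x'))) = 1 := hall (PresentedGroup.of x')
        exact this
      · exact hlamT _ (hTw σ)
    have h0 : lam (FreeGroup.of 0) = 1 := htop (Subgroup.mem_top _)
    have h1 : lam (FreeGroup.of 1) = 1 := htop (Subgroup.mem_top _)
    exact hlamne ⟨h0, h1⟩
  -- contradiction with torsion abelianization
  obtain ⟨q₀, hq₀⟩ := hχne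
  obtain ⟨w₀, rfl⟩ := PresentedGroup.mk_surjective R q₀
  set χ₀ := χ.comp (PresentedGroup.mk R) with hχ₀
  have hliftid : FreeGroup.lift (fun x => χ₀ (FreeGroup.of x)) = χ₀ := by
    apply FreeGroup.ext_hom; intro x; rw [FreeGroup.lift_apply_of]
  have hrels : ∀ r ∈ R ∪ Sg, FreeGroup.lift (fun x => χ₀ (FreeGroup.of x)) r = 1 := by
    rw [hliftid]
    rintro r (hr | hr)
    · show χ (PresentedGroup.mk R r) = 1
      have hone : PresentedGroup.mk R r = 1 :=
        (QuotientGroup.eq_one_iff r).mpr (Subgroup.subset_normalClosure hr)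
      rw [hone, map_one]
    · exact hχσ ⟨r, hr⟩
  set χhat := PresentedGroup.toGroup hrels with hχhat
  have hχhatmk : ∀ v : FreeGroup X, χhat (PresentedGroup.mk (R ∪ Sg) v) = χ₀ v := by
    have hcomp : χhat.comp (PresentedGroup.mk (R ∪ Sg)) = χ₀ := by
      apply FreeGroup.ext_hom
      intro x
      exact PresentedGroup.toGroup.of hrels
    intro v
    exact congrArg (fun f : FreeGroup X →* Multiplicative ℤ => f v) hcomp
  have habs := htors (Abelianization.of (PresentedGroup.mk (R ∪ Sg) w₀))
  obtain ⟨n, hn, hpown⟩ := isOfFinOrder_iff_pow_eq_one.mp habs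
  have hlift := congrArg (Abelianization.lift χhat) hpown
  rw [map_pow, map_one, Abelianization.lift_apply_of, hχhatmk] at hlift
  have hk : (n : ℤ) * Multiplicative.toAdd (χ₀ w₀) = 0 := by
    have := congrArg Multiplicative.toAdd hlift
    rw [toAdd_pow] at this
    simpa [nsmul_eq_mul] using this
  rcases mul_eq_zero.mp hk with h | h
  · exact absurd (Int.natCast_eq_zero.mp h) (Nat.pos_iff_ne_zero.mp hn)
  · exact hq₀ (toAdd_eq_zero.mp h)

/-- Claim 3.2: with `Q`, `R`, `Σ` as in Lemma 3.1 and `φ : W_{Σ,1} → Q × Q` a surjection,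
the normal closure of `H₁₁ ∪ H₁₁'` is all of `W_{Σ,1}`, where `H₁₁` is generated by the
`y_{1σ}` and `H₁₁'` by the `ι(σ)⁻¹ y_{1σ}`. -/
theorem stmt2 (X : Type) [Finite X] (R : Set (FreeGroup X))
    (hHopf : IsHopfian (PresentedGroup R))
    (hF2 : ∃ θ : PresentedGroup R →* FreeGroup (Fin 2), Function.Surjective θ)
    (hcent : ∀ H : Subgroup (PresentedGroup R), IsFreeGroup H → ¬ IsCyclic H →
      Subgroup.centralizer (H : Set (PresentedGroup R)) = ⊥)
    (Sg : Set (FreeGroup X)) (hSfin : Sg.Finite) (hSne : Sg.Nonempty)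
    (htors : Monoid.IsTorsion (Abelianization (PresentedGroup (R ∪ Sg))))
    (φ : PresentedGroup (Wrels X R Sg 1) →* PresentedGroup R × PresentedGroup R)
    (hφ : Function.Surjective φ) :
    Subgroup.normalClosure
        ((↑(Subgroup.closure
            { w : PresentedGroup (Wrels X R Sg 1) | ∃ σ : Sg,
                w = PresentedGroup.of (Sum.inr ((0 : Fin 1), σ)) }) : Set (PresentedGroup (Wrels X R Sg 1))) ∪
          ↑(Subgroup.closure
            { w : PresentedGroup (Wrels X R Sg 1) | ∃ σ : Sg,
                w = QuotientGroup.mk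
                  ((FreeGroup.map Sum.inl (σ : FreeGroup X))⁻¹ *
                    FreeGroup.of (Sum.inr ((0 : Fin 1), σ))) })) = ⊤ := by
  classical
  obtain ⟨θ, hθ⟩ := hF2
  -- basic facts about the relators
  have hone : ∀ r ∈ Wrels X R Sg 1, PresentedGroup.mk (Wrels X R Sg 1) r = 1 := by
    intro r hr
    exact (QuotientGroup.eq_one_iff r).mpr (Subgroup.subset_normalClosure hr)
  -- the homomorphism μ : Q → W
  have hμrel : ∀ r ∈ R, FreeGroup.lift
      (fun x => (PresentedGroup.of (Sum.inl x) : PresentedGroup (Wrels X R Sg 1))) r = 1 := by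
    intro r hr
    have hkey : FreeGroup.lift
        (fun x => (PresentedGroup.of (Sum.inl x) : PresentedGroup (Wrels X R Sg 1)))
        = (PresentedGroup.mk (Wrels X R Sg 1)).comp (FreeGroup.map Sum.inl) := by
      apply FreeGroup.ext_hom
      intro x
      rw [FreeGroup.lift_apply_of, MonoidHom.comp_apply, FreeGroup.map.of]
      rfl
    rw [hkey]
    exact hone _ (Or.inl (Or.inl ⟨r, hr, rfl⟩))
  set μ : PresentedGroup R →* PresentedGroup (Wrels X R Sg 1) :=
    PresentedGroup.toGroup hμrel with hμ
  have hμof : ∀ x : X, μ (PresentedGroup.of x) = PresentedGroup.of (Sum.inl x) :=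
    fun x => PresentedGroup.toGroup.of hμrel
  have hμmk : ∀ a : FreeGroup X, μ (PresentedGroup.mk R a)
      = PresentedGroup.mk (Wrels X R Sg 1) (FreeGroup.map Sum.inl a) := by
    have hcomp : μ.comp (PresentedGroup.mk R)
        = (PresentedGroup.mk (Wrels X R Sg 1)).comp (FreeGroup.map Sum.inl) := by
      apply FreeGroup.ext_hom
      intro x
      rw [MonoidHom.comp_apply, MonoidHom.comp_apply, FreeGroup.map.of]
      exact hμof x
    intro a
    exact congrArg (fun f : FreeGroup X →* PresentedGroup (Wrels X R Sg 1) => f a) hcomp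
  set ρ : PresentedGroup R →* PresentedGroup R × PresentedGroup R := φ.comp μ with hρ
  set v : Sg → PresentedGroup R × PresentedGroup R :=
    fun σ => φ (PresentedGroup.of (Sum.inr ((0 : Fin 1), σ))) with hv
  set u : Sg → PresentedGroup R × PresentedGroup R :=
    fun σ => ρ (PresentedGroup.mk R (σ : FreeGroup X)) with huDef
  have hu : ∀ σ : Sg, u σ
      = φ (PresentedGroup.mk (Wrels X R Sg 1) (FreeGroup.map Sum.inl (σ : FreeGroup X))) := by
    intro σ
    rw [huDef]
    show φ (μ (PresentedGroup.mk R (σ : FreeGroup X))) = _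
    rw [hμmk]
  have hcommrel : ∀ σ τ : Sg, Commute ((u σ)⁻¹ * v σ) (v τ) := by
    intro σ τ
    have h1 := hone _ (Or.inl (Or.inr ⟨0, σ, τ, rfl⟩))
    have h2 : ⁅φ (PresentedGroup.mk (Wrels X R Sg 1)
          ((FreeGroup.map Sum.inl (σ : FreeGroup X))⁻¹ *
            FreeGroup.of (Sum.inr ((0 : Fin 1), σ)))),
        φ (PresentedGroup.mk (Wrels X R Sg 1) (FreeGroup.of (Sum.inr ((0 : Fin 1), τ))))⁆ = 1 := by
      rw [← map_commutatorElement, ← map_commutatorElement, h1, map_one]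
    rw [commutatorElement_eq_one_iff_commute] at h2
    have h3 : φ (PresentedGroup.mk (Wrels X R Sg 1)
          ((FreeGroup.map Sum.inl (σ : FreeGroup X))⁻¹ *
            FreeGroup.of (Sum.inr ((0 : Fin 1), σ)))) = (u σ)⁻¹ * v σ := by
      rw [map_mul, map_inv, map_mul, map_inv, hu]
      rfl
    rw [h3] at h2
    exact h2
  -- generation of Q × Q
  have hgen : (⊤ : Subgroup (PresentedGroup R × PresentedGroup R)) = Subgroup.closure
      (Set.range (fun x : X => ρ (PresentedGroup.of x)) ∪ Set.range v) := by
    have h1 : Subgroup.map φ ⊤ = ⊤ := Subgroup.map_top_of_surjective φ hφ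
    rw [← PresentedGroup.closure_range_of (Wrels X R Sg 1), MonoidHom.map_closure] at h1
    rw [← h1]
    congr 1
    ext y
    constructor
    · rintro ⟨x, ⟨g, rfl⟩, rfl⟩
      cases g with
      | inl x' =>
        left
        exact ⟨x', by rw [hρ]; show φ (μ (PresentedGroup.of x')) = _; rw [hμof]⟩
      | inr p =>
        right
        obtain ⟨s, σ⟩ := p
        refine ⟨σ, ?_⟩
        have hs : s = 0 := Subsingleton.elim s 0
        subst hs
        rfl
    · rintro (⟨x', rfl⟩ | ⟨σ, rfl⟩)
      · refine ⟨PresentedGroup.of (Sum.inl x'), ⟨Sum.inl x', rfl⟩, ?_⟩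
        rw [hρ]
        show φ (PresentedGroup.of (Sum.inl x')) = φ (μ (PresentedGroup.of x'))
        rw [hμof]
      · exact ⟨PresentedGroup.of (Sum.inr ((0 : Fin 1), σ)), ⟨Sum.inr ((0 : Fin 1), σ), rfl⟩, rfl⟩
  -- coordinates
  have coordinst : ∀ π : PresentedGroup R × PresentedGroup R →* PresentedGroup R,
      Function.Surjective π →
      (∀ σ : Sg, π ((u σ)⁻¹ * v σ) = 1) ∨ (∀ σ : Sg, π (v σ) = 1) := by
    intro π hπ
    have hdc : ∀ σ : Sg, (π.comp ρ) (PresentedGroup.mk R (σ : FreeGroup X))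
        = π (v σ) * (π ((u σ)⁻¹ * v σ))⁻¹ := by
      intro σ
      have h4 : v σ * ((u σ)⁻¹ * v σ)⁻¹ = u σ := by group
      rw [MonoidHom.comp_apply]
      show π (u σ) = π (v σ) * (π ((u σ)⁻¹ * v σ))⁻¹
      conv_lhs => rw [← h4]
      rw [map_mul, map_inv]
    have hcw : ∀ σ τ : Sg, Commute (π ((u σ)⁻¹ * v σ)) (π (v τ)) :=
      fun σ τ => (hcommrel σ τ).map π
    have hg2 : (⊤ : Subgroup (PresentedGroup R)) = Subgroup.closure
        (Set.range (fun x : X => (π.comp ρ) (PresentedGroup.of x))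
          ∪ Set.range (fun σ => π (v σ))) := by
      have h1 : Subgroup.map π ⊤ = ⊤ := Subgroup.map_top_of_surjective π hπ
      rw [hgen, MonoidHom.map_closure] at h1
      rw [← h1]
      congr 1
      ext y
      constructor
      · rintro ⟨x, (⟨x', rfl⟩ | ⟨σ, rfl⟩), rfl⟩
        · exact Or.inl ⟨x', rfl⟩
        · exact Or.inr ⟨σ, rfl⟩
      · rintro (⟨x', rfl⟩ | ⟨σ, rfl⟩)
        · exact ⟨ρ (PresentedGroup.of x'), Or.inl ⟨x', rfl⟩, rfl⟩
        · exact ⟨v σ, Or.inr ⟨σ, rfl⟩, rfl⟩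
    exact coord R Sg hcent θ hθ htors (π.comp ρ) (fun σ => π (v σ))
      (fun σ => π ((u σ)⁻¹ * v σ)) hdc hcw hg2
  have hfstsurj : Function.Surjective (MonoidHom.fst (PresentedGroup R) (PresentedGroup R)) :=
    fun q => ⟨(q, 1), rfl⟩
  have hsndsurj : Function.Surjective (MonoidHom.snd (PresentedGroup R) (PresentedGroup R)) :=
    fun q => ⟨(1, q), rfl⟩
  have hC1 := coordinst _ hfstsurj
  have hC2 := coordinst _ hsndsurj
  -- surjectivity of the coordinate maps
  have hρsurj : ∀ π : PresentedGroup R × PresentedGroup R →* PresentedGroup R,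
      Function.Surjective π →
      ((∀ σ : Sg, π ((u σ)⁻¹ * v σ) = 1) ∨ (∀ σ : Sg, π (v σ) = 1)) →
      Function.Surjective (π.comp ρ) := by
    intro π hπ hcase
    rw [← MonoidHom.range_eq_top, eq_top_iff]
    have h1 : Subgroup.map π ⊤ = ⊤ := Subgroup.map_top_of_surjective π hπ
    rw [hgen, MonoidHom.map_closure] at h1
    rw [← h1, Subgroup.closure_le]
    rintro y ⟨x, (⟨x', rfl⟩ | ⟨σ, rfl⟩), rfl⟩
    · exact ⟨PresentedGroup.of x', rfl⟩
    · rcases hcase with hI | hII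
      · refine ⟨PresentedGroup.mk R (σ : FreeGroup X), ?_⟩
        have h2 : π (u σ) = π (v σ) := by
          have := hI σ
          rw [map_mul, map_inv] at this
          exact (inv_mul_eq_one.mp this)
        show π (u σ) = π (v σ)
        exact h2
      · exact ⟨1, by rw [map_one, hII σ]⟩
  have hρ1surj := hρsurj _ hfstsurj hC1
  have hρ2surj := hρsurj _ hsndsurj hC2
  have hρ1inj := hHopf _ hρ1surj
  have hρ2inj := hHopf _ hρ2surj
  -- the key normal closure in Q
  set Sset : Set (PresentedGroup R) :=
    Set.range (fun σ : Sg => PresentedGroup.mk R (σ : FreeGroup X)) with hSset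
  have NORM : Subgroup.normalClosure Sset = ⊤ := by
    rcases hC1 with hI1 | hII1
    · -- first coordinate: b = 1
      have huv1 : ∀ σ : Sg, (u σ).1 = (v σ).1 := by
        intro σ
        have h5 : ((u σ).1)⁻¹ * (v σ).1 = 1 := hI1 σ
        exact inv_mul_eq_one.mp h5
      set M := Subgroup.normalClosure (Set.range (fun σ : Sg =>
        ((MonoidHom.fst _ _).comp ρ) (PresentedGroup.mk R (σ : FreeGroup X)))) with hM
      have hMv : ∀ σ : Sg, (v σ).1 ∈ M := by
        intro σ
        have h6 : ((MonoidHom.fst _ _).comp ρ) (PresentedGroup.mk R (σ : FreeGroup X))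
            = (v σ).1 := huv1 σ
        exact h6 ▸ Subgroup.subset_normalClosure ⟨σ, rfl⟩
      haveI : M.Normal := Subgroup.normalClosure_normal
      set Ψ := (QuotientGroup.mk' M).prodMap (MonoidHom.id (PresentedGroup R)) with hΨ
      have hΨs : Function.Surjective Ψ := by
        rintro ⟨cbar, q⟩
        obtain ⟨p, rfl⟩ := QuotientGroup.mk'_surjective M cbar
        exact ⟨(p, q), rfl⟩
      have hhs : Function.Surjective (Ψ.comp ρ) := by
        rw [← MonoidHom.range_eq_top, eq_top_iff]
        have h1 := Subgroup.map_top_of_surjective Ψ hΨs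
        rw [hgen, MonoidHom.map_closure] at h1
        rw [← h1, Subgroup.closure_le]
        rintro y ⟨x, (⟨x', rfl⟩ | ⟨σ, rfl⟩), rfl⟩
        · exact ⟨PresentedGroup.of x', rfl⟩
        · rcases hC2 with hI2 | hII2
          · refine ⟨PresentedGroup.mk R (σ : FreeGroup X), ?_⟩
            show Ψ (u σ) = Ψ (v σ)
            have huv2 : (u σ).2 = (v σ).2 := by
              have h5 : ((u σ).2)⁻¹ * (v σ).2 = 1 := hI2 σ
              exact inv_mul_eq_one.mp h5
            have : u σ = v σ := Prod.ext (huv1 σ) huv2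
            rw [this]
          · refine ⟨1, ?_⟩
            show Ψ (ρ 1) = Ψ (v σ)
            rw [map_one, map_one]
            have e1 : QuotientGroup.mk' M (v σ).1 = 1 :=
              (QuotientGroup.eq_one_iff _).mpr (hMv σ)
            have e2 : (v σ).2 = 1 := hII2 σ
            show ((1 : PresentedGroup R ⧸ M), (1 : PresentedGroup R))
              = (QuotientGroup.mk' M (v σ).1, (v σ).2)
            rw [e1, e2]
      have hsndinj : Function.Injective
          ((MonoidHom.snd (PresentedGroup R ⧸ M) (PresentedGroup R)).comp (Ψ.comp ρ)) := by
        have heq : (MonoidHom.snd (PresentedGroup R ⧸ M) (PresentedGroup R)).comp (Ψ.comp ρ)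
            = (MonoidHom.snd (PresentedGroup R) (PresentedGroup R)).comp ρ := rfl
        rw [heq]
        exact hρ2inj
      have hM1 := prod_surj_left (Ψ.comp ρ) hhs hsndinj
      have hMtop : M = ⊤ := by
        rw [eq_top_iff]
        intro x _
        exact (QuotientGroup.eq_one_iff x).mp (hM1 (QuotientGroup.mk x))
      have himg : Subgroup.map ((MonoidHom.fst _ _).comp ρ) (Subgroup.normalClosure Sset)
          = M := by
        rw [Subgroup.map_normalClosure _ _ hρ1surj, hM]
        congr 1
        ext y
        constructor
        · rintro ⟨q, ⟨σ, rfl⟩, rfl⟩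
          exact ⟨σ, rfl⟩
        · rintro ⟨σ, rfl⟩
          exact ⟨_, ⟨σ, rfl⟩, rfl⟩
      rw [hMtop] at himg
      have hcm := Subgroup.comap_map_eq_self_of_injective hρ1inj (Subgroup.normalClosure Sset)
      rw [himg, Subgroup.comap_top] at hcm
      exact hcm.symm
    · rcases hC2 with hI2 | hII2
      · -- second coordinate: b = 1, first coordinate: v = 1
        have huv2 : ∀ σ : Sg, (u σ).2 = (v σ).2 := by
          intro σ
          have h5 : ((u σ).2)⁻¹ * (v σ).2 = 1 := hI2 σ
          exact inv_mul_eq_one.mp h5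
        set M := Subgroup.normalClosure (Set.range (fun σ : Sg =>
          ((MonoidHom.snd _ _).comp ρ) (PresentedGroup.mk R (σ : FreeGroup X)))) with hM
        have hMv : ∀ σ : Sg, (v σ).2 ∈ M := by
          intro σ
          have h6 : ((MonoidHom.snd _ _).comp ρ) (PresentedGroup.mk R (σ : FreeGroup X))
              = (v σ).2 := huv2 σ
          exact h6 ▸ Subgroup.subset_normalClosure ⟨σ, rfl⟩
        haveI : M.Normal := Subgroup.normalClosure_normal
        set Ψ := (MonoidHom.id (PresentedGroup R)).prodMap (QuotientGroup.mk' M) with hΨ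
        have hΨs : Function.Surjective Ψ := by
          rintro ⟨q, cbar⟩
          obtain ⟨p, rfl⟩ := QuotientGroup.mk'_surjective M cbar
          exact ⟨(q, p), rfl⟩
        have hhs : Function.Surjective (Ψ.comp ρ) := by
          rw [← MonoidHom.range_eq_top, eq_top_iff]
          have h1 := Subgroup.map_top_of_surjective Ψ hΨs
          rw [hgen, MonoidHom.map_closure] at h1
          rw [← h1, Subgroup.closure_le]
          rintro y ⟨x, (⟨x', rfl⟩ | ⟨σ, rfl⟩), rfl⟩
          · exact ⟨PresentedGroup.of x', rfl⟩
          · refine ⟨1, ?_⟩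
            show Ψ (ρ 1) = Ψ (v σ)
            rw [map_one, map_one]
            have e1 : (v σ).1 = 1 := hII1 σ
            have e2 : QuotientGroup.mk' M (v σ).2 = 1 :=
              (QuotientGroup.eq_one_iff _).mpr (hMv σ)
            show ((1 : PresentedGroup R), (1 : PresentedGroup R ⧸ M))
              = ((v σ).1, QuotientGroup.mk' M (v σ).2)
            rw [e1, e2]
        have hfstinj : Function.Injective
            ((MonoidHom.fst (PresentedGroup R) (PresentedGroup R ⧸ M)).comp (Ψ.comp ρ)) := by
          have heq : (MonoidHom.fst (PresentedGroup R) (PresentedGroup R ⧸ M)).comp (Ψ.comp ρ)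
              = (MonoidHom.fst (PresentedGroup R) (PresentedGroup R)).comp ρ := rfl
          rw [heq]
          exact hρ1inj
        have hM1 := prod_surj_right (Ψ.comp ρ) hhs hfstinj
        have hMtop : M = ⊤ := by
          rw [eq_top_iff]
          intro x _
          exact (QuotientGroup.eq_one_iff x).mp (hM1 (QuotientGroup.mk x))
        have himg : Subgroup.map ((MonoidHom.snd _ _).comp ρ) (Subgroup.normalClosure Sset)
            = M := by
          rw [Subgroup.map_normalClosure _ _ hρ2surj, hM]
          congr 1
          ext y
          constructor
          · rintro ⟨q, ⟨σ, rfl⟩, rfl⟩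
            exact ⟨σ, rfl⟩
          · rintro ⟨σ, rfl⟩
            exact ⟨_, ⟨σ, rfl⟩, rfl⟩
        rw [hMtop] at himg
        have hcm := Subgroup.comap_map_eq_self_of_injective hρ2inj (Subgroup.normalClosure Sset)
        rw [himg, Subgroup.comap_top] at hcm
        exact hcm.symm
      · -- all of v vanishes
        have hρs : Function.Surjective ρ := by
          rw [← MonoidHom.range_eq_top, eq_top_iff]
          rw [hgen, Subgroup.closure_le]
          rintro y (⟨x', rfl⟩ | ⟨σ, rfl⟩)
          · exact ⟨PresentedGroup.of x', rfl⟩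
          · refine ⟨1, ?_⟩
            rw [map_one]
            have e1 : (v σ).1 = 1 := hII1 σ
            have e2 : (v σ).2 = 1 := hII2 σ
            exact (Prod.ext e1 e2).symm
        have htriv := prod_surj_left ρ hρs hρ2inj
        rw [eq_top_iff]
        intro x _
        have hx1 := htriv x
        rw [hx1]
        exact Subgroup.one_mem _
  -- conclude
  set Hset1 : Set (PresentedGroup (Wrels X R Sg 1)) :=
    { w | ∃ σ : Sg, w = PresentedGroup.of (Sum.inr ((0 : Fin 1), σ)) } with hHset1
  set Hset2 : Set (PresentedGroup (Wrels X R Sg 1)) :=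
    { w | ∃ σ : Sg, w = QuotientGroup.mk
        ((FreeGroup.map Sum.inl (σ : FreeGroup X))⁻¹ *
          FreeGroup.of (Sum.inr ((0 : Fin 1), σ))) } with hHset2
  set N := Subgroup.normalClosure
    ((↑(Subgroup.closure Hset1) : Set (PresentedGroup (Wrels X R Sg 1))) ∪
      ↑(Subgroup.closure Hset2)) with hNdef
  haveI : N.Normal := Subgroup.normalClosure_normal
  have hyN : ∀ σ : Sg, PresentedGroup.mk (Wrels X R Sg 1)
      (FreeGroup.of (Sum.inr ((0 : Fin 1), σ))) ∈ N :=
    fun σ => Subgroup.subset_normalClosure (Or.inl (Subgroup.subset_closure ⟨σ, rfl⟩))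
  have hzN : ∀ σ : Sg, PresentedGroup.mk (Wrels X R Sg 1)
      ((FreeGroup.map Sum.inl (σ : FreeGroup X))⁻¹ *
        FreeGroup.of (Sum.inr ((0 : Fin 1), σ))) ∈ N :=
    fun σ => Subgroup.subset_normalClosure (Or.inr (Subgroup.subset_closure ⟨σ, rfl⟩))
  have haN : ∀ σ : Sg, PresentedGroup.mk (Wrels X R Sg 1)
      (FreeGroup.map Sum.inl (σ : FreeGroup X)) ∈ N := by
    intro σ
    have h7 : PresentedGroup.mk (Wrels X R Sg 1) (FreeGroup.map Sum.inl (σ : FreeGroup X))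
        = PresentedGroup.mk (Wrels X R Sg 1) (FreeGroup.of (Sum.inr ((0 : Fin 1), σ))) *
          (PresentedGroup.mk (Wrels X R Sg 1)
            ((FreeGroup.map Sum.inl (σ : FreeGroup X))⁻¹ *
              FreeGroup.of (Sum.inr ((0 : Fin 1), σ))))⁻¹ := by
      rw [map_mul, map_inv]
      group
    rw [h7]
    exact mul_mem (hyN σ) (inv_mem (hzN σ))
  set ξ := (QuotientGroup.mk' N).comp μ with hξdef
  have hξσ : ∀ σ : Sg, ξ (PresentedGroup.mk R (σ : FreeGroup X)) = 1 := by
    intro σ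
    show QuotientGroup.mk' N (μ (PresentedGroup.mk R (σ : FreeGroup X))) = 1
    rw [hμmk]
    exact (QuotientGroup.eq_one_iff _).mpr (haN σ)
  have hker : Subgroup.normalClosure Sset ≤ ξ.ker := by
    apply Subgroup.normalClosure_le_normal
    rintro q ⟨σ, rfl⟩
    exact MonoidHom.mem_ker.mpr (hξσ σ)
  rw [NORM] at hker
  rw [eq_top_iff, ← PresentedGroup.closure_range_of (Wrels X R Sg 1), Subgroup.closure_le]
  rintro g ⟨a, rfl⟩
  cases a with
  | inl x =>
    have h8 : ξ (PresentedGroup.of x) = 1 := MonoidHom.mem_ker.mp (hker (Subgroup.mem_top _))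
    have h9 : QuotientGroup.mk' N (PresentedGroup.of (Sum.inl x)) = 1 := by
      rw [← hμof x]
      exact h8
    exact (QuotientGroup.eq_one_iff _).mp h9
  | inr p =>
    obtain ⟨s, σ⟩ := p
    have hs : s = 0 := Subsingleton.elim s 0
    subst hs
    exact hyN σ
end

section
/- Let N be a group and y ∈ N such that for every integer m ≥ 1 the normal closure of {y^m} in N is all of N. Then N has no proper subgroup of finite index: every subgroup of N of finite index equals N. -/
/-- If every power `y^m` (`m ≥ 1`) of some element `y` normally generates `N`, then `N`
has no proper subgroup of finite index. -/
theorem stmt9 (N : Type) [Group N] (y : N)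
    (h : ∀ m : ℕ, 1 ≤ m → Subgroup.normalClosure ({y ^ m} : Set N) = ⊤) :
    ∀ H : Subgroup N, H.index ≠ 0 → H = ⊤ := by
  intro H hH
  haveI : H.FiniteIndex := ⟨hH⟩
  haveI : H.normalCore.FiniteIndex := Subgroup.finiteIndex_normalCore H
  set K := H.normalCore
  have hKidx : K.index ≠ 0 := Subgroup.FiniteIndex.index_ne_zero
  have hyK : y ^ K.index ∈ K := K.pow_index_mem y
  have hclos : Subgroup.normalClosure ({y ^ K.index} : Set N) ≤ K :=
    Subgroup.normalClosure_le_normal (by simpa using hyK)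
  rw [h K.index (Nat.one_le_iff_ne_zero.mpr hKidx)] at hclos
  exact top_le_iff.mp (le_trans hclos H.normalCore_le)
end

section
/- Let p ≥ 1 be an integer and set m := 3^8 · p!. In the free group F on two generators x and y, the normal closure of the four elements y^m, Π_{j=m}^{2m+1}(x·y^j), Π_{j=3m}^{4m+2}(x·y^j), and Π_{j=5m}^{6m+3}(x·y^j) is the whole group F. Equivalently, the group presented on generators x, y with these four relators is trivial. (Asserted in the proof of Proposition 2.1 of the paper.) -/
/-- The ordered product `(g·h^a)(g·h^{a+1})⋯(g·h^b)`. -/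
def seg {G : Type*} [Group G] (g h : G) (a b : ℕ) : G :=
  ((List.range (b + 1 - a)).map (fun i => g * h ^ (a + i))).prod

lemma seg_succ {G : Type*} [Group G] (g h : G) (a b : ℕ) (hab : a ≤ b + 1) :
    seg g h a (b + 1) = seg g h a b * (g * h ^ (b + 1)) := by
  unfold seg
  have h1 : b + 1 + 1 - a = (b + 1 - a) + 1 := by omega
  have h2 : a + (b + 1 - a) = b + 1 := by omega
  rw [h1, List.range_succ, List.map_append, List.prod_append]
  simp [h2]

lemma seg_shift {G : Type*} [Group G] (g h : G) (c t : ℕ) (hc : h ^ c = 1) :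
    seg g h c (c + t) = seg g h 0 t := by
  unfold seg
  have h1 : c + t + 1 - c = t + 1 - 0 := by omega
  rw [h1]
  congr 1
  apply List.map_congr_left
  intro i _
  rw [pow_add, hc, one_mul, Nat.zero_add]

lemma seg_map {G H : Type*} [Group G] [Group H] (f : G →* H) (g h : G) (a b : ℕ) :
    f (seg g h a b) = seg (f g) (f h) a b := by
  unfold seg
  rw [map_list_prod, List.map_map]
  congr 1
  apply List.map_congr_left
  intro i _
  simp

/-- From the proof of Proposition 2.1: for `m = 3^8 · p!`, the four listed words normally
generate the free group on `x, y`. -/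
theorem stmt10 (p : ℕ) (hp : 1 ≤ p) (m : ℕ) (hm : m = 3 ^ 8 * Nat.factorial p) :
    Subgroup.normalClosure
      ({(FreeGroup.of 1 : FreeGroup (Fin 2)) ^ m,
        seg (FreeGroup.of 0) (FreeGroup.of 1) m (2 * m + 1),
        seg (FreeGroup.of 0) (FreeGroup.of 1) (3 * m) (4 * m + 2),
        seg (FreeGroup.of 0) (FreeGroup.of 1) (5 * m) (6 * m + 3)} :
        Set (FreeGroup (Fin 2))) = ⊤ := by
  set S : Set (FreeGroup (Fin 2)) :=
    {(FreeGroup.of 1 : FreeGroup (Fin 2)) ^ m,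
      seg (FreeGroup.of 0) (FreeGroup.of 1) m (2 * m + 1),
      seg (FreeGroup.of 0) (FreeGroup.of 1) (3 * m) (4 * m + 2),
      seg (FreeGroup.of 0) (FreeGroup.of 1) (5 * m) (6 * m + 3)} with hS
  set N := Subgroup.normalClosure S with hN
  haveI : N.Normal := Subgroup.normalClosure_normal
  let π : FreeGroup (Fin 2) →* FreeGroup (Fin 2) ⧸ N := QuotientGroup.mk' N
  have hone : ∀ w ∈ S, π w = 1 := by
    intro w hw
    rw [QuotientGroup.mk'_apply, QuotientGroup.eq_one_iff]
    exact Subgroup.subset_normalClosure hw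
  set X : FreeGroup (Fin 2) ⧸ N := π (FreeGroup.of 0) with hX
  set Y : FreeGroup (Fin 2) ⧸ N := π (FreeGroup.of 1) with hY
  have hYm : Y ^ m = 1 := by
    rw [hY, ← map_pow]
    exact hone _ (by simp [hS])
  have hseg1 : seg X Y m (2 * m + 1) = 1 := by
    rw [hX, hY, ← seg_map]
    exact hone _ (by simp [hS])
  have hseg2 : seg X Y (3 * m) (4 * m + 2) = 1 := by
    rw [hX, hY, ← seg_map]
    exact hone _ (by simp [hS])
  have hseg3 : seg X Y (5 * m) (6 * m + 3) = 1 := by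
    rw [hX, hY, ← seg_map]
    exact hone _ (by simp [hS])
  have hY3m : Y ^ (3 * m) = 1 := by rw [mul_comm, pow_mul, hYm, one_pow]
  have hY5m : Y ^ (5 * m) = 1 := by rw [mul_comm, pow_mul, hYm, one_pow]
  have e1 : seg X Y 0 (m + 1) = 1 := by
    have := seg_shift X Y m (m + 1) hYm
    rw [show m + (m + 1) = 2 * m + 1 by ring] at this
    rw [← this, hseg1]
  have e2 : seg X Y 0 (m + 2) = 1 := by
    have := seg_shift X Y (3 * m) (m + 2) hY3m
    rw [show 3 * m + (m + 2) = 4 * m + 2 by ring] at this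
    rw [← this, hseg2]
  have e3 : seg X Y 0 (m + 3) = 1 := by
    have := seg_shift X Y (5 * m) (m + 3) hY5m
    rw [show 5 * m + (m + 3) = 6 * m + 3 by ring] at this
    rw [← this, hseg3]
  have f2 : X * Y ^ (m + 2) = 1 := by
    have := seg_succ X Y 0 (m + 1) (by omega)
    rw [show m + 1 + 1 = m + 2 by ring] at this
    rw [e2, e1, one_mul] at this
    exact this.symm
  have f3 : X * Y ^ (m + 3) = 1 := by
    have := seg_succ X Y 0 (m + 2) (by omega)
    rw [show m + 2 + 1 = m + 3 by ring] at this
    rw [e3, e2, one_mul] at this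
    exact this.symm
  have hY1 : Y = 1 := by
    have : X * Y ^ (m + 2) * Y = 1 := by
      rw [mul_assoc, ← pow_succ, show m + 2 + 1 = m + 3 by ring, f3]
    rw [f2, one_mul] at this
    exact this
  have hX1 : X = 1 := by
    rw [hY1, one_pow, mul_one] at f2
    exact f2
  have hmem : ∀ i : Fin 2, FreeGroup.of i ∈ N := by
    intro i
    fin_cases i
    · rw [← QuotientGroup.eq_one_iff (G := FreeGroup (Fin 2)) (N := N)]
      exact hX1
    · rw [← QuotientGroup.eq_one_iff (G := FreeGroup (Fin 2)) (N := N)]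
      exact hY1
  rw [eq_top_iff, ← FreeGroup.closure_range_of, Subgroup.closure_le]
  rintro w ⟨i, rfl⟩
  exact hmem i
end

section
/- Let α be a type and let A and B be subgroups of the free group FreeGroup α such that every element of A commutes with every element of B. If A ≠ ⊥ and B ≠ ⊥, then the subgroup A ⊔ B generated by A and B is cyclic: there exists g ∈ FreeGroup α with A ⊔ B ≤ Subgroup.zpowers g. (Equivalently, as used in the proofs of Lemma 3.1 and Claim 3.2 of the paper: if two elementwise-commuting subgroups of a free group generate a non-cyclic subgroup, then one of them is trivial.) -/
/-!
Subgroups of free groups are free (Nielsen–Schreier), and a free group with a nontrivial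
central element `z` is cyclic: for each generator `x`, the subgroup generated by `z` and `x`
is free and abelian, hence cyclic, and as `x` is not a proper power this forces `z ∈ ⟨x⟩`;
exponent sums show that `z` cannot be a power of two distinct generators. So centralizers of
nontrivial elements of a free group are cyclic. For `a ≠ 1` in `A` and `b ≠ 1` in `B`, the
group `B` lies in the abelian centralizer of `a`, so `A ⊔ B` lies in the cyclic centralizer
of `b`.
-/

open Subgroup

namespace FreeGroup

instance isCyclic_of_subsingleton {β : Type*} [Subsingleton β] : IsCyclic (FreeGroup β) := by
  cases isEmpty_or_nonempty β with
  | inl => infer_instance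
  | inr h =>
    obtain ⟨x⟩ := h
    have := uniqueOfSubsingleton x
    infer_instance

end FreeGroup

namespace IsFreeGroup

variable {G : Type*} [Group G] [IsFreeGroup G]

theorem isCyclic_of_subsingleton_generators [Subsingleton (Generators G)] : IsCyclic G :=
  isCyclic_of_surjective (toFreeGroup G).symm (toFreeGroup G).symm.surjective

theorem eq_of_commute_of {x y : Generators G} (h : Commute (of x) (of y)) : x = y := by
  classical
  by_contra hxy
  have key := congrArg (lift fun s => if s = x then Equiv.swap (0 : Fin 3) 1
    else if s = y then Equiv.swap 1 2 else 1) h.eq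
  simp [Ne.symm hxy] at key
  exact absurd key (by decide)

theorem isCyclic_of_isMulCommutative [IsMulCommutative G] : IsCyclic G :=
  have : Subsingleton (Generators G) := ⟨fun _ _ => eq_of_commute_of (mul_comm' _ _)⟩
  isCyclic_of_subsingleton_generators

open Classical in
noncomputable def exponentSum (x : Generators G) : G →* Multiplicative ℤ :=
  lift (Pi.mulSingle x (Multiplicative.ofAdd 1))

@[simp]
theorem exponentSum_of_self (x : Generators G) : exponentSum x (of x) = Multiplicative.ofAdd 1 := by
  simp [exponentSum]

@[simp]
theorem exponentSum_of_of_ne {x y : Generators G} (h : y ≠ x) : exponentSum x (of y) = 1 := by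
  simp [exponentSum, h]

theorem zpowers_le_zpowers_of_of_zpow_eq {x : Generators G} {u : G} {k : ℤ} (hk : u ^ k = of x) :
    zpowers u ≤ zpowers (of x) := by
  have hdeg : k * (exponentSum x u).toAdd = 1 := by
    simpa [mul_comm] using congrArg (fun g => (exponentSum x g).toAdd) hk
  rcases Int.eq_one_or_neg_one_of_mul_eq_one hdeg with rfl | rfl
  · rw [← hk, zpow_one]
  · rw [← zpowers_inv, ← hk, zpow_neg_one]

theorem mem_zpowers_of_of_commute {z : G} {x : Generators G} (h : Commute z (of x)) :
    z ∈ zpowers (of x) := by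
  have : IsMulCommutative (closure {z, of x}) := isMulCommutative_closure (by
    rintro _ (rfl | rfl) _ (rfl | rfl)
    exacts [rfl, h.eq, h.eq.symm, rfl])
  have := isCyclic_of_isMulCommutative (G := closure {z, of x})
  obtain ⟨u, hu⟩ := (closure {z, of x}).isCyclic_iff_exists_zpowers_eq_top.mp this
  obtain ⟨k, hk⟩ := mem_zpowers_iff.mp (hu ▸ subset_closure (by simp) : of x ∈ zpowers u)
  exact zpowers_le_zpowers_of_of_zpow_eq hk (hu ▸ subset_closure (by simp))

theorem subsingleton_generators_of_mem_center {z : G} (hz : z ≠ 1) (hc : z ∈ center G) :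
    Subsingleton (Generators G) := by
  refine ⟨fun x y => by_contra fun hxy => hz ?_⟩
  obtain ⟨m, rfl⟩ := mem_zpowers_iff.mp
    (mem_zpowers_of_of_commute (mem_center_iff.mp hc (of x)).symm)
  obtain ⟨n, hn⟩ := mem_zpowers_iff.mp
    (mem_zpowers_of_of_commute (mem_center_iff.mp hc (of y)).symm)
  have hm : m = 0 := by
    simpa [exponentSum_of_of_ne (Ne.symm hxy)] using
      (congrArg (fun g => (exponentSum x g).toAdd) hn).symm
  rw [hm, zpow_zero]

theorem isCyclic_centralizer {e : G} (he : e ≠ 1) : IsCyclic (centralizer {e}) := by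
  have hcenter : (⟨e, mem_centralizer_singleton_iff.mpr rfl⟩ : centralizer {e}) ∈ center _ :=
    mem_center_iff.mpr fun ⟨_, hg⟩ => Subtype.ext (mem_centralizer_singleton_iff.mp hg)
  have := subsingleton_generators_of_mem_center (fun h => he (congrArg Subtype.val h)) hcenter
  exact isCyclic_of_subsingleton_generators

end IsFreeGroup

/-- Two nontrivial elementwise-commuting subgroups of a free group generate a cyclic
subgroup. -/
theorem stmt15 (α : Type) (A B : Subgroup (FreeGroup α))
    (hcomm : ∀ a ∈ A, ∀ b ∈ B, a * b = b * a)
    (hA : A ≠ ⊥) (hB : B ≠ ⊥) :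
    ∃ g : FreeGroup α, A ⊔ B ≤ Subgroup.zpowers g := by
  obtain ⟨a₀, ha₀A, ha₀⟩ := A.bot_or_exists_ne_one.resolve_left hA
  obtain ⟨b₀, hb₀B, hb₀⟩ := B.bot_or_exists_ne_one.resolve_left hB
  have hB_le : B ≤ centralizer {a₀} := fun b hb =>
    mem_centralizer_singleton_iff.mpr (hcomm a₀ ha₀A b hb).symm
  have := IsFreeGroup.isCyclic_centralizer ha₀
  have hle : A ⊔ B ≤ centralizer {b₀} := sup_le
    (fun a ha => mem_centralizer_singleton_iff.mpr (hcomm a ha b₀ hb₀B))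
    (fun b hb => mem_centralizer_singleton_iff.mpr
      (setLike_mul_comm (hB_le hb) (hB_le hb₀B)))
  obtain ⟨g, hg⟩ := (centralizer {b₀}).isCyclic_iff_exists_zpowers_eq_top.mp
    (IsFreeGroup.isCyclic_centralizer hb₀)
  exact ⟨g, hg ▸ hle⟩
end
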